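/- arXiv:2011.06054 — 7 statements merged into one kernel-verified Lean document; each statement's English description precedes it below -/
import Mathlib

section
/- Let B be an element of the Lie algebra so(n-1,1) of the Lorentz group. Then the eigenvalues of B (over the complex numbers) are either all purely imaginary (counting 0 as purely imaginary), or consist of n-2 purely imaginary eigenvalues together with a pair of nonzero real eigenvalues ±μ. -/
open Matrix Polynomial


noncomputable def dd (n : ℕ) (i : Fin n) : ℝ := if (i : ℕ) = n - 1 then -1 else 1

noncomputable def ipc {n : ℕ} (v w : Fin n → ℂ) : ℂ :=
  ∑ i, (starRingEnd ℂ) (v i) * ((dd n i : ℝ) : ℂ) * w i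

lemma dd_sq {n : ℕ} (i : Fin n) : dd n i * dd n i = 1 := by
  unfold dd; split <;> norm_num

lemma ipc_smul_left {n : ℕ} (a : ℂ) (v w : Fin n → ℂ) :
    ipc (a • v) w = (starRingEnd ℂ) a * ipc v w := by
  simp [ipc, Finset.mul_sum]; ring_nf

lemma ipc_smul_right {n : ℕ} (a : ℂ) (v w : Fin n → ℂ) :
    ipc v (a • w) = a * ipc v w := by
  simp [ipc, Finset.mul_sum]
  exact Finset.sum_congr rfl fun i _ => by ring

lemma ipc_add_left {n : ℕ} (v v' w : Fin n → ℂ) :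
    ipc (v + v') w = ipc v w + ipc v' w := by
  simp [ipc, ← Finset.sum_add_distrib]
  exact Finset.sum_congr rfl fun i _ => by ring

lemma ipc_add_right {n : ℕ} (v w w' : Fin n → ℂ) :
    ipc v (w + w') = ipc v w + ipc v w' := by
  simp [ipc, ← Finset.sum_add_distrib]
  exact Finset.sum_congr rfl fun i _ => by ring

lemma ipc_conj_symm {n : ℕ} (v w : Fin n → ℂ) :
    ipc w v = (starRingEnd ℂ) (ipc v w) := by
  simp [ipc]
  exact Finset.sum_congr rfl fun i _ => by
    simp [mul_comm]; ring

-- key anti-selfadjointness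
lemma ipc_mulVec {n : ℕ} (C : Matrix (Fin n) (Fin n) ℝ)
    (hC : Cᵀ * (Matrix.diagonal (dd n)) + (Matrix.diagonal (dd n)) * C = 0)
    (v w : Fin n → ℂ) :
    ipc ((C.map (algebraMap ℝ ℂ)) *ᵥ v) w = - ipc v ((C.map (algebraMap ℝ ℂ)) *ᵥ w) := by
  have key : ∀ i j, C i j * dd n i = -(dd n j * C j i) := by
    intro i j
    have := congrFun (congrFun hC j) i
    simpa [Matrix.mul_apply, Matrix.diagonal, Finset.sum_ite_eq, Finset.sum_ite_eq',
      Matrix.transpose_apply, eq_neg_iff_add_eq_zero] using this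
  unfold ipc
  simp only [Matrix.mulVec, Matrix.map_apply, dotProduct, map_sum, _root_.map_mul]
  have step1 : ∀ i : Fin n,
      (∑ j, (starRingEnd ℂ) ((algebraMap ℝ ℂ) (C i j)) * (starRingEnd ℂ) (v j)) * ((dd n i : ℝ) : ℂ) * w i
      = ∑ j, ((-(dd n j * C j i) : ℝ) : ℂ) * ((starRingEnd ℂ) (v j) * w i) := by
    intro i
    rw [Finset.sum_mul, Finset.sum_mul]
    refine Finset.sum_congr rfl fun j _ => ?_
    rw [← key i j]
    simp only [Complex.coe_algebraMap, Complex.conj_ofReal]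
    push_cast
    ring
  rw [Finset.sum_congr rfl fun i _ => step1 i, Finset.sum_comm, ← neg_eq_iff_eq_neg, ← Finset.sum_neg_distrib]
  refine Finset.sum_congr rfl fun j _ => ?_
  rw [Finset.mul_sum, ← Finset.sum_neg_distrib]
  refine Finset.sum_congr rfl fun i _ => ?_
  simp only [Complex.coe_algebraMap]
  push_cast
  ring

lemma no_isotropic_plane {n : ℕ} (hn : 0 < n) (v w : Fin n → ℂ)
    (hvv : ipc v v = 0) (hww : ipc w w = 0) (hvw : ipc v w = 0) (hwv : ipc w v = 0)
    (hind : ∀ a b : ℂ, a • v + b • w = 0 → a = 0 ∧ b = 0) : False := by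
  set m : Fin n := ⟨n - 1, by omega⟩ with hm
  obtain ⟨a, b, hab, hcoord⟩ : ∃ a b : ℂ, ¬(a = 0 ∧ b = 0) ∧ a * v m + b * w m = 0 := by
    by_cases h : v m = 0 ∧ w m = 0
    · exact ⟨1, 0, by simp, by simp [h.1, h.2]⟩
    · refine ⟨w m, -(v m), fun hc => h ⟨?_, ?_⟩, by ring⟩
      · simpa using hc.2
      · exact hc.1
  set u : Fin n → ℂ := a • v + b • w with hu
  have hum : u m = 0 := by simpa [hu] using hcoord
  have huu : ipc u u = 0 := by
    rw [hu, ipc_add_left, ipc_add_right, ipc_add_right, ipc_smul_left, ipc_smul_left,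
      ipc_smul_right, ipc_smul_right, ipc_smul_left, ipc_smul_left, ipc_smul_right,
      ipc_smul_right, hvv, hww, hvw, hwv]
    ring
  have hterm : ∀ i : Fin n, (starRingEnd ℂ) (u i) * ((dd n i : ℝ) : ℂ) * u i
      = ((dd n i * Complex.normSq (u i) : ℝ) : ℂ) := by
    intro i
    rw [mul_comm ((starRingEnd ℂ) (u i)) _, mul_assoc, mul_comm _ (u i), Complex.mul_conj]
    push_cast
    ring
  have hsum : ∑ i, dd n i * Complex.normSq (u i) = 0 := by
    have : ((∑ i, dd n i * Complex.normSq (u i) : ℝ) : ℂ) = 0 := by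
      push_cast
      rw [← huu, ipc]
      refine Finset.sum_congr rfl fun i _ => ?_
      rw [hterm i]
      push_cast
      ring
    exact_mod_cast this
  have hnonneg : ∀ i ∈ Finset.univ, 0 ≤ dd n i * Complex.normSq (u i) := by
    intro i _
    by_cases hi : i = m
    · simp [hi, hum]
    · have : dd n i = 1 := by
        unfold dd
        rw [if_neg]
        intro hcon
        exact hi (Fin.ext (by simpa using hcon))
      rw [this, one_mul]
      exact Complex.normSq_nonneg _
  have hzero : ∀ i ∈ Finset.univ, dd n i * Complex.normSq (u i) = 0 :=
    (Finset.sum_eq_zero_iff_of_nonneg hnonneg).mp hsum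
  have huzero : u = 0 := by
    funext i
    by_cases hi : i = m
    · simpa [hi] using hum
    · have h1 : dd n i = 1 := by
        unfold dd
        rw [if_neg]
        intro hcon
        exact hi (Fin.ext (by simpa using hcon))
      have := hzero i (Finset.mem_univ i)
      rw [h1, one_mul] at this
      exact Complex.normSq_eq_zero.mp this
  exact hab (hind a b huzero)

lemma eval_charpoly' {n : ℕ} {R : Type*} [CommRing R] (M : Matrix (Fin n) (Fin n) R) (x : R) :
    (Matrix.charpoly M).eval x = (x • (1 : Matrix (Fin n) (Fin n) R) - M).det := by
  rw [Matrix.charpoly, _root_.eval_det, matPolyEquiv_charmatrix]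
  simp [smul_one_eq_diagonal]

-- eigenvector existence from root of charpoly
lemma exists_eigenvec {n : ℕ} {K : Type*} [Field K] (M : Matrix (Fin n) (Fin n) K) {z : K}
    (hz : (Matrix.charpoly M).eval z = 0) :
    ∃ v : Fin n → K, v ≠ 0 ∧ M *ᵥ v = z • v := by
  rw [eval_charpoly'] at hz
  obtain ⟨v, hv0, hv⟩ := (Matrix.exists_mulVec_eq_zero_iff).mpr hz
  refine ⟨v, hv0, ?_⟩
  have := hv
  rw [Matrix.sub_mulVec, sub_eq_zero, Matrix.smul_mulVec, Matrix.one_mulVec] at this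
  exact this.symm

-- card of roots over ℂ
lemma card_roots_charpoly {n : ℕ} (M : Matrix (Fin n) (Fin n) ℂ) :
    Multiset.card (Matrix.charpoly M).roots = n := by
  have hm : (Matrix.charpoly M).Monic := Matrix.charpoly_monic M
  have hs : (Matrix.charpoly M).Splits := IsAlgClosed.splits _
  have := (Polynomial.splits_iff_card_roots).mp hs
  rw [this, Matrix.charpoly_natDegree_eq_dim, Fintype.card_fin]

lemma roots_neg_symm {q : ℂ[X]} {n : ℕ} (hm : q.Monic) (hcard : Multiset.card q.roots = n)
    (hdeg : q.natDegree = n)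
    (hsym : ∀ x : ℂ, q.eval x = (-1)^n * q.eval (-x)) :
    q.roots.map (fun z => -z) = q.roots := by
  have hprod : (q.roots.map (fun a => X - C a)).prod = q :=
    prod_multiset_X_sub_C_of_monic_of_roots_card_eq hm (by rw [hcard, hdeg])
  set q' : ℂ[X] := (q.roots.map (fun a => X - C (-a))).prod with hq'
  have hq'eq : q' = q := by
    apply Polynomial.funext
    intro x
    have e1 : q'.eval x = (q.roots.map (fun a => x + a)).prod := by
      rw [hq', Polynomial.eval_multiset_prod, Multiset.map_map]
      congr 1
      apply Multiset.map_congr rfl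
      intro a _
      simp
    have e2 : q.eval (-x) = (q.roots.map (fun a => -(x + a))).prod := by
      conv_lhs => rw [← hprod]
      rw [Polynomial.eval_multiset_prod, Multiset.map_map]
      congr 1
      apply Multiset.map_congr rfl
      intro a _
      simp
      ring
    have e3 : (q.roots.map (fun a => -(x + a))).prod
        = (-1 : ℂ)^n * (q.roots.map (fun a => x + a)).prod := by
      have : (q.roots.map (fun a => -(x + a))) = ((q.roots.map (fun a => x + a)).map Neg.neg) := by
        rw [Multiset.map_map]; rfl
      rw [this, Multiset.prod_map_neg, Multiset.card_map, hcard]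
    rw [e1, hsym x, e2, e3, ← mul_assoc, ← pow_add]
    rw [show ((-1 : ℂ))^(n+n) = 1 by rw [← two_mul, pow_mul]; norm_num]
    ring
  have : q'.roots = q.roots.map (fun z => -z) := by
    rw [hq']
    have : (q.roots.map (fun a => X - C (-a))) = ((q.roots.map (fun z => -z)).map (fun a => X - C a)) := by
      rw [Multiset.map_map]; rfl
    rw [this, roots_multiset_prod_X_sub_C]
  rw [← this, hq'eq]

lemma roots_conj_symm (p : ℝ[X]) :
    ((p.map (algebraMap ℝ ℂ)).roots).map (starRingEnd ℂ) = (p.map (algebraMap ℝ ℂ)).roots := by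
  set q := p.map (algebraMap ℝ ℂ) with hq
  have hs : q.Splits := IsAlgClosed.splits _
  have h1 : (q.map (starRingEnd ℂ)).roots = q.roots.map (starRingEnd ℂ) := hs.roots_map _
  have h2 : q.map (starRingEnd ℂ) = q := by
    rw [hq, Polynomial.map_map]
    congr 1
    ext r
    simp [Complex.conj_ofReal]
  rw [← h1, h2]

lemma gen_eig {n : ℕ} (A : Matrix (Fin n) (Fin n) ℂ) (μ : ℂ)
    (h2 : 2 ≤ (Matrix.charpoly A).roots.count μ) :
    (∃ v w : Fin n → ℂ, A *ᵥ v = μ • v ∧ A *ᵥ w = μ • w ∧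
      (∀ a b : ℂ, a • v + b • w = 0 → a = 0 ∧ b = 0)) ∨
    (∃ v w : Fin n → ℂ, v ≠ 0 ∧ A *ᵥ v = μ • v ∧ A *ᵥ w = μ • w + v) := by
  set φ : Module.End ℂ (Fin n → ℂ) := Matrix.toLin' (A - μ • (1 : Matrix (Fin n) (Fin n) ℂ)) with hφ
  have hφapp : ∀ x, φ x = A *ᵥ x - μ • x := by
    intro x
    rw [hφ, Matrix.toLin'_apply, Matrix.sub_mulVec, Matrix.smul_mulVec, Matrix.one_mulVec]
  -- charpoly of φ
  have hφch : LinearMap.charpoly φ = Matrix.charpoly (A - μ • (1 : Matrix (Fin n) (Fin n) ℂ)) := by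
    rw [hφ, ← LinearMap.charpoly_toMatrix (Matrix.toLin' (A - μ • (1 : Matrix (Fin n) (Fin n) ℂ))) (Pi.basisFun ℂ (Fin n))]
    congr 1
    rw [LinearMap.toMatrix_eq_toMatrix', LinearMap.toMatrix'_toLin']
  have hshift : Matrix.charpoly (A - μ • (1 : Matrix (Fin n) (Fin n) ℂ))
      = (Matrix.charpoly A).comp (X + C μ) := by
    apply Polynomial.funext
    intro x
    rw [eval_charpoly', Polynomial.eval_comp, Polynomial.eval_add, Polynomial.eval_X,
      Polynomial.eval_C, eval_charpoly']
    congr 1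
    rw [add_smul]
    abel
  have hfin : Module.finrank ℂ (φ.maxGenEigenspace 0) = (Matrix.charpoly A).roots.count μ := by
    rw [LinearMap.finrank_maxGenEigenspace_zero_eq, hφch, hshift, Polynomial.count_roots,
      Polynomial.rootMultiplicity_eq_natTrailingDegree]
  -- eigenvector for μ
  have hroot : (Matrix.charpoly A).eval μ = 0 := by
    have : μ ∈ (Matrix.charpoly A).roots := Multiset.count_pos.mp (by omega)
    exact (Polynomial.mem_roots (Matrix.charpoly_monic A).ne_zero).mp this
  obtain ⟨v, hv0, hv⟩ := exists_eigenvec A hroot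
  have hvker : φ v = 0 := by rw [hφapp, hv, sub_self]
  by_cases hcase : ∃ w, φ w = 0 ∧ w ∉ Submodule.span ℂ {v}
  · obtain ⟨w, hwker, hwsp⟩ := hcase
    left
    refine ⟨v, w, hv, ?_, ?_⟩
    · have := hφapp w
      rw [hwker] at this
      exact sub_eq_zero.mp this.symm
    · intro a b hab
      have hbzero : b = 0 := by
        by_contra hb
        apply hwsp
        have : w = (-(a / b)) • v := by
          have h1 : b • w = -(a • v) := by
            rw [← add_eq_zero_iff_eq_neg.symm] at hab
            · linear_combination (norm := module) hab
          have := congrArg (fun x => b⁻¹ • x) h1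
          simp only [smul_smul, inv_mul_cancel₀ hb, one_smul] at this
          rw [this]
          match_scalars
          field_simp
        rw [this]
        exact Submodule.smul_mem _ _ (Submodule.mem_span_singleton_self v)
      rw [hbzero, zero_smul, add_zero, smul_eq_zero] at hab
      exact ⟨hab.resolve_right hv0, hbzero⟩
  · -- ker φ ≤ span v
    push_neg at hcase
    have hker : ∀ x, φ x = 0 → x ∈ Submodule.span ℂ {v} := hcase
    -- there is a generalized eigenvector
    have hexists : ∃ w0, φ (φ w0) = 0 ∧ φ w0 ≠ 0 := by
      by_contra hcon
      push_neg at hcon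
      -- then ker φ^k ≤ span v for all k
      have hk2 : ∀ x, φ (φ x) = 0 → φ x = 0 := hcon
      have hkerpow : ∀ k : ℕ, ∀ x, (φ ^ k) x = 0 → x ∈ Submodule.span ℂ {v} := by
        intro k
        induction k with
        | zero => intro x hx; simp at hx; simp [hx]
        | succ k ih =>
          intro x hx
          have h1 : (φ ^ k) (φ x) = 0 := by
            rw [← Module.End.mul_apply, ← pow_succ]
            exact hx
          have h2 : φ x ∈ Submodule.span ℂ {v} := ih (φ x) h1
          -- show φ x = 0 then x ∈ ker φ ≤ span
          have hφv : ∀ y ∈ Submodule.span ℂ {v}, φ y = 0 := by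
            intro y hy
            obtain ⟨c, rfl⟩ := Submodule.mem_span_singleton.mp hy
            rw [_root_.map_smul, hvker, smul_zero]
          have := hk2 x (by rw [hφv (φ x) h2])
          exact hker x this
      have hle : φ.maxGenEigenspace 0 ≤ Submodule.span ℂ {v} := by
        have hV : φ.maxGenEigenspace 0 = ⨆ k : ℕ, LinearMap.ker (φ ^ k) := by
          simp [← Module.End.iSup_genEigenspace_eq, Module.End.genEigenspace_nat]
        rw [hV]
        apply iSup_le
        intro k x hx
        exact hkerpow k x hx
      have hle2 : Module.finrank ℂ (φ.maxGenEigenspace 0) ≤ 1 := by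
        calc Module.finrank ℂ (φ.maxGenEigenspace 0)
            ≤ Module.finrank ℂ (Submodule.span ℂ {v}) := Submodule.finrank_mono hle
          _ = 1 := finrank_span_singleton hv0
      omega
    obtain ⟨w0, hw1, hw2⟩ := hexists
    obtain ⟨c, hc⟩ := Submodule.mem_span_singleton.mp (hker (φ w0) hw1)
    have hcne : c ≠ 0 := by
      intro h
      rw [h, zero_smul] at hc
      exact hw2 hc.symm
    right
    refine ⟨v, c⁻¹ • w0, hv0, hv, ?_⟩
    have hφw : φ (c⁻¹ • w0) = v := by
      rw [_root_.map_smul, ← hc, smul_smul, inv_mul_cancel₀ hcne, one_smul]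
    rw [hφapp] at hφw
    have := congrArg (fun x => x + μ • (c⁻¹ • w0)) hφw
    simp only [sub_add_cancel] at this
    rw [this]
    abel


lemma ipc_pairing {n : ℕ} (C : Matrix (Fin n) (Fin n) ℝ)
    (hC : Cᵀ * (Matrix.diagonal (dd n)) + (Matrix.diagonal (dd n)) * C = 0)
    {v w : Fin n → ℂ} {lam mu : ℂ}
    (hv : (C.map (algebraMap ℝ ℂ)) *ᵥ v = lam • v)
    (hw : (C.map (algebraMap ℝ ℂ)) *ᵥ w = mu • w) :
    ((starRingEnd ℂ) lam + mu) * ipc v w = 0 := by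
  have h := ipc_mulVec C hC v w
  rw [hv, hw, ipc_smul_left, ipc_smul_right] at h
  linear_combination h

lemma core {n : ℕ} (hn : 0 < n) (C : Matrix (Fin n) (Fin n) ℝ)
    (hC : Cᵀ * (Matrix.diagonal (dd n)) + (Matrix.diagonal (dd n)) * C = 0)
    (l1 l2 : ℂ) (v1 v2 : Fin n → ℂ) (hv1 : v1 ≠ 0) (hv2 : v2 ≠ 0)
    (he1 : (C.map (algebraMap ℝ ℂ)) *ᵥ v1 = l1 • v1)
    (he2 : (C.map (algebraMap ℝ ℂ)) *ᵥ v2 = l2 • v2)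
    (h1 : (starRingEnd ℂ) l1 + l1 ≠ 0) (h2 : (starRingEnd ℂ) l2 + l2 ≠ 0)
    (h12 : (starRingEnd ℂ) l1 + l2 ≠ 0) (hne : l1 ≠ l2) : False := by
  have hvv : ipc v1 v1 = 0 :=
    (mul_eq_zero.mp (ipc_pairing C hC he1 he1)).resolve_left h1
  have hww : ipc v2 v2 = 0 :=
    (mul_eq_zero.mp (ipc_pairing C hC he2 he2)).resolve_left h2
  have hvw : ipc v1 v2 = 0 :=
    (mul_eq_zero.mp (ipc_pairing C hC he1 he2)).resolve_left h12
  have hwv : ipc v2 v1 = 0 := by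
    rw [ipc_conj_symm, hvw, map_zero]
  refine no_isotropic_plane hn v1 v2 hvv hww hvw hwv ?_
  intro a b hab
  have happ := congrArg (fun x => (C.map (algebraMap ℝ ℂ)) *ᵥ x) hab
  simp only [Matrix.mulVec_add, Matrix.mulVec_smul, he1, he2, Matrix.mulVec_zero] at happ
  have hscaled := congrArg (fun x => l2 • x) hab
  simp only [smul_add, smul_smul, smul_zero] at hscaled
  have hdiff : (a * (l1 - l2)) • v1 = 0 := by
    linear_combination (norm := module) happ - hscaled
  have ha : a = 0 := by
    rcases smul_eq_zero.mp hdiff with h | h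
    · rcases mul_eq_zero.mp h with h' | h'
      · exact h'
      · exact absurd (sub_eq_zero.mp h') hne
    · exact absurd h hv1
  have hb : b = 0 := by
    rw [ha, zero_smul, zero_add, smul_eq_zero] at hab
    exact hab.resolve_right hv2
  exact ⟨ha, hb⟩

lemma count_le_one {n : ℕ} (hn : 0 < n) (C : Matrix (Fin n) (Fin n) ℝ)
    (hC : Cᵀ * (Matrix.diagonal (dd n)) + (Matrix.diagonal (dd n)) * C = 0)
    (μ : ℝ) (hμ : μ ≠ 0)
    (h2 : 2 ≤ (Matrix.charpoly (C.map (algebraMap ℝ ℂ))).roots.count (μ : ℂ)) : False := by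
  have hμc : ((μ : ℂ)) ≠ 0 := by exact_mod_cast hμ
  have hconjμ : (starRingEnd ℂ) (μ : ℂ) = (μ : ℂ) := Complex.conj_ofReal μ
  have h2μ : (starRingEnd ℂ) (μ : ℂ) + (μ : ℂ) ≠ 0 := by
    rw [hconjμ]
    intro h
    apply hμc
    have : (2 : ℂ) * μ = 0 := by linear_combination h
    rcases mul_eq_zero.mp this with h' | h'
    · norm_num at h'
    · exact h'
  rcases gen_eig (C.map (algebraMap ℝ ℂ)) (μ : ℂ) h2 with ⟨v, w, hv, hw, hind⟩ | ⟨v, w, hv0, hv, hw⟩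
  · have hvne : v ≠ 0 := by
      intro h
      have := hind 1 0 (by rw [h]; simp)
      norm_num at this
    have hvv : ipc v v = 0 := (mul_eq_zero.mp (ipc_pairing C hC hv hv)).resolve_left h2μ
    have hww : ipc w w = 0 := (mul_eq_zero.mp (ipc_pairing C hC hw hw)).resolve_left h2μ
    have hvw : ipc v w = 0 := (mul_eq_zero.mp (ipc_pairing C hC hv hw)).resolve_left h2μ
    have hwv : ipc w v = 0 := by rw [ipc_conj_symm, hvw, map_zero]
    exact no_isotropic_plane hn v w hvv hww hvw hwv hind
  · have hvv : ipc v v = 0 := (mul_eq_zero.mp (ipc_pairing C hC hv hv)).resolve_left h2μ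
    have hvw : ipc v w = 0 := by
      have h := ipc_mulVec C hC v w
      rw [hv, hw, ipc_smul_left, ipc_add_right, ipc_smul_right, hconjμ, hvv] at h
      have : (2 : ℂ) * ((μ : ℂ) * ipc v w) = 0 := by linear_combination h
      rcases mul_eq_zero.mp this with h' | h'
      · norm_num at h'
      · rcases mul_eq_zero.mp h' with h'' | h''
        · exact absurd h'' hμc
        · exact h''
    have hwv : ipc w v = 0 := by rw [ipc_conj_symm, hvw, map_zero]
    have hww : ipc w w = 0 := by
      have h := ipc_mulVec C hC w w
      rw [hw, ipc_add_left, ipc_add_right, ipc_smul_left, ipc_smul_right, hconjμ, hvw, hwv] at h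
      have : (2 : ℂ) * ((μ : ℂ) * ipc w w) = 0 := by linear_combination h
      rcases mul_eq_zero.mp this with h' | h'
      · norm_num at h'
      · rcases mul_eq_zero.mp h' with h'' | h''
        · exact absurd h'' hμc
        · exact h''
    refine no_isotropic_plane hn v w hvv hww hvw hwv ?_
    intro a b hab
    have hb : b = 0 := by
      by_contra hbne
      have hwv' : w = (-(a/b)) • v := by
        have h1 : b • w = -(a • v) := by
          linear_combination (norm := module) hab
        have := congrArg (fun x => b⁻¹ • x) h1
        simp only [smul_smul, inv_mul_cancel₀ hbne, one_smul] at this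
        rw [this]
        match_scalars
        field_simp
      have := hw
      rw [hwv'] at this
      rw [Matrix.mulVec_smul, hv, smul_smul, smul_smul, mul_comm] at this
      have hveq : v = 0 := by
        have := congrArg (fun x => x - ((μ : ℂ) * (-(a/b))) • v) this
        simp only [sub_self, add_sub_cancel_left] at this
        exact this.symm
      exact hv0 hveq
    rw [hb, zero_smul, add_zero, smul_eq_zero] at hab
    exact ⟨hab.resolve_right hv0, hb⟩

/-- the eigenvalues of an element `B` of `so(n-1,1)` are either all
purely imaginary, or consist of `n-2` purely imaginary eigenvalues together with a
pair of nonzero real eigenvalues `±μ`. -/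
theorem stmt_0 (n : ℕ) (J B : Matrix (Fin n) (Fin n) ℝ)
    (hJsymm : Jᵀ = J)
    (hJsig : ∃ P : Matrix (Fin n) (Fin n) ℝ, IsUnit P ∧
      Pᵀ * J * P = Matrix.diagonal (fun i : Fin n => if (i : ℕ) = n - 1 then (-1 : ℝ) else 1))
    (hB : Bᵀ * J + J * B = 0) :
    (∀ z ∈ ((Matrix.charpoly B).map (algebraMap ℝ ℂ)).roots, z.re = 0) ∨
    (∃ μ : ℝ, μ ≠ 0 ∧ ∃ S : Multiset ℂ, (∀ z ∈ S, z.re = 0) ∧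
      Multiset.card S = n - 2 ∧
      ((Matrix.charpoly B).map (algebraMap ℝ ℂ)).roots =
        (μ : ℂ) ::ₘ (-μ : ℂ) ::ₘ S) := by
  obtain ⟨P, hPu, hPJP⟩ := hJsig
  have hPJP' : Pᵀ * J * P = Matrix.diagonal (dd n) := by
    rw [hPJP]; rfl
  have hPdet : IsUnit P.det := (Matrix.isUnit_iff_isUnit_det P).mp hPu
  have h1 : P * P⁻¹ = 1 := Matrix.mul_nonsing_inv P hPdet
  have h1' : P⁻¹ * P = 1 := Matrix.nonsing_inv_mul P hPdet
  have h2 : (P⁻¹)ᵀ * Pᵀ = 1 := by rw [← Matrix.transpose_mul, h1, Matrix.transpose_one]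
  set C : Matrix (Fin n) (Fin n) ℝ := P⁻¹ * B * P with hCdef
  -- C satisfies the so(n-1,1) equation w.r.t. the diagonal form
  have hC : Cᵀ * (Matrix.diagonal (dd n)) + (Matrix.diagonal (dd n)) * C = 0 := by
    rw [← hPJP', hCdef]
    simp only [Matrix.transpose_mul, Matrix.mul_assoc]
    rw [← Matrix.mul_assoc ((P⁻¹)ᵀ) (Pᵀ) (J * P), h2, Matrix.one_mul]
    rw [← Matrix.mul_assoc P (P⁻¹) (B * P), h1, Matrix.one_mul]
    have : Bᵀ * (J * P) + J * (B * P) = (Bᵀ * J + J * B) * P := by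
      rw [Matrix.add_mul, Matrix.mul_assoc, Matrix.mul_assoc]
    rw [← Matrix.mul_add, this, hB, Matrix.zero_mul, Matrix.mul_zero]
  -- charpoly is invariant
  have hch : Matrix.charpoly C = Matrix.charpoly B := by
    apply Polynomial.funext
    intro x
    rw [eval_charpoly', eval_charpoly']
    have : x • (1 : Matrix (Fin n) (Fin n) ℝ) - C = P⁻¹ * (x • 1 - B) * P := by
      rw [hCdef, Matrix.mul_sub, Matrix.sub_mul]
      congr 1
      rw [Matrix.mul_smul, Matrix.mul_one, Matrix.smul_mul, h1']
    rw [this, Matrix.det_conj' hPu]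
  set Mc : Matrix (Fin n) (Fin n) ℂ := C.map (algebraMap ℝ ℂ) with hMcdef
  set q : ℂ[X] := Matrix.charpoly Mc with hqdef
  have hq : q = (Matrix.charpoly B).map (algebraMap ℝ ℂ) := by
    rw [hqdef, hMcdef, Matrix.charpoly_map, hch]
  rw [← hq]
  -- complexified diagonal form
  set E : Matrix (Fin n) (Fin n) ℂ := (Matrix.diagonal (dd n)).map (algebraMap ℝ ℂ) with hEdef
  have hE2 : E * E = 1 := by
    rw [hEdef, Matrix.diagonal_map (map_zero _), Matrix.diagonal_mul_diagonal]
    rw [show (fun i => (algebraMap ℝ ℂ) (dd n i) * (algebraMap ℝ ℂ) (dd n i)) = fun _ => (1 : ℂ) by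
      funext i
      rw [← _root_.map_mul, dd_sq, _root_.map_one]]
    exact Matrix.diagonal_one
  have hMcE : Mcᵀ * E + E * Mc = 0 := by
    have h0 : (Cᵀ * Matrix.diagonal (dd n) + Matrix.diagonal (dd n) * C).map (algebraMap ℝ ℂ)
        = (0 : Matrix (Fin n) (Fin n) ℝ).map (algebraMap ℝ ℂ) := by rw [hC]
    rw [Matrix.map_add _ (fun a b => map_add (algebraMap ℝ ℂ) a b), Matrix.map_mul, Matrix.map_mul,
      Matrix.transpose_map, Matrix.map_zero _ (map_zero _)] at h0
    exact h0
  -- symmetry of charpoly under negation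
  have hsymq : ∀ x : ℂ, q.eval x = (-1 : ℂ)^n * q.eval (-x) := by
    intro x
    have hrep : Mc = -(E * (Mcᵀ * E)) := by
      have hEMc : E * Mc = -(Mcᵀ * E) := eq_neg_of_add_eq_zero_right hMcE
      calc Mc = (E * E) * Mc := by rw [hE2, Matrix.one_mul]
        _ = E * (E * Mc) := by rw [Matrix.mul_assoc]
        _ = E * (-(Mcᵀ * E)) := by rw [hEMc]
        _ = -(E * (Mcᵀ * E)) := by rw [Matrix.mul_neg]
    have step1 : q.eval x = (x • 1 + Mcᵀ).det := by
      rw [hqdef, eval_charpoly']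
      have : x • (1 : Matrix (Fin n) (Fin n) ℂ) - Mc = E * ((x • 1 + Mcᵀ)) * E := by
        rw [Matrix.mul_add, Matrix.add_mul]
        have e1 : E * (x • (1 : Matrix (Fin n) (Fin n) ℂ)) * E = x • 1 := by
          rw [Matrix.mul_smul, Matrix.mul_one, Matrix.smul_mul, hE2]
        rw [e1]
        conv_lhs => rw [hrep]
        rw [sub_neg_eq_add, Matrix.mul_assoc]
      rw [this, Matrix.det_mul, Matrix.det_mul]
      have : E.det * (x • 1 + Mcᵀ).det * E.det = (x • 1 + Mcᵀ).det * (E.det * E.det) := by ring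
      rw [this, ← Matrix.det_mul, hE2, Matrix.det_one, mul_one]
    have step2 : (x • (1 : Matrix (Fin n) (Fin n) ℂ) + Mcᵀ).det = (x • 1 + Mc).det := by
      rw [show x • (1 : Matrix (Fin n) (Fin n) ℂ) + Mcᵀ = (x • 1 + Mc)ᵀ by
        rw [Matrix.transpose_add, Matrix.transpose_smul, Matrix.transpose_one]]
      rw [Matrix.det_transpose]
    have step3 : q.eval (-x) = (-1 : ℂ)^n * (x • 1 + Mc).det := by
      rw [hqdef, eval_charpoly']
      have : (-x) • (1 : Matrix (Fin n) (Fin n) ℂ) - Mc = -(x • 1 + Mc) := by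
        rw [neg_smul, neg_add, sub_eq_add_neg]
      rw [this, Matrix.det_neg, Fintype.card_fin]
    rw [step1, step2, step3, ← mul_assoc, ← pow_add,
      show ((-1 : ℂ))^(n+n) = 1 by rw [← two_mul, pow_mul]; norm_num, one_mul]
  -- basic facts about the roots
  have hmonic : q.Monic := Matrix.charpoly_monic Mc
  have hcard : Multiset.card q.roots = n := card_roots_charpoly Mc
  have hdeg : q.natDegree = n := by rw [hqdef, Matrix.charpoly_natDegree_eq_dim, Fintype.card_fin]
  have hneg : q.roots.map (fun z => -z) = q.roots := roots_neg_symm hmonic hcard hdeg hsymq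
  have hconj : q.roots.map (starRingEnd ℂ) = q.roots := by
    rw [hq]
    exact roots_conj_symm (Matrix.charpoly B)
  have hmemneg : ∀ z ∈ q.roots, -z ∈ q.roots := by
    intro z hz
    rw [← hneg]
    exact Multiset.mem_map_of_mem _ hz
  have hmemconj : ∀ z ∈ q.roots, (starRingEnd ℂ) z ∈ q.roots := by
    intro z hz
    rw [← hconj]
    exact Multiset.mem_map_of_mem _ hz
  -- eigenvector existence from root
  have heig : ∀ z ∈ q.roots, ∃ v : Fin n → ℂ, v ≠ 0 ∧ Mc *ᵥ v = z • v := by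
    intro z hz
    exact exists_eigenvec Mc ((Polynomial.mem_roots hmonic.ne_zero).mp hz)
  by_cases hall : ∀ z ∈ q.roots, z.re = 0
  · left; exact hall
  right
  push_neg at hall
  obtain ⟨z₀, hz₀mem, hz₀re⟩ := hall
  have hn : 0 < n := by
    rcases Nat.eq_zero_or_pos n with h | h
    · exfalso
      have : q.roots = 0 := Multiset.card_eq_zero.mp (by rw [hcard, h])
      rw [this] at hz₀mem
      simp at hz₀mem
    · exact h
  -- any root with nonzero real part is real
  have hreal : ∀ z ∈ q.roots, z.re ≠ 0 → z.im = 0 := by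
    intro z hz hre
    by_contra him
    obtain ⟨v1, hv1, he1⟩ := heig z hz
    obtain ⟨v2, hv2, he2⟩ := heig _ (hmemconj z hz)
    refine core hn C hC z ((starRingEnd ℂ) z) v1 v2 hv1 hv2 he1 he2 ?_ ?_ ?_ ?_
    · intro h
      apply hre
      have := congrArg Complex.re h
      simp [Complex.add_re, Complex.conj_re] at this
      linarith [this]
    · intro h
      apply hre
      have := congrArg Complex.re h
      simp [Complex.add_re, Complex.conj_re] at this
      linarith [this]
    · intro h
      apply hre
      have := congrArg Complex.re h
      simp [Complex.add_re, Complex.conj_re] at this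
      linarith [this]
    · intro h
      apply him
      have := congrArg Complex.im h
      simp [Complex.conj_im] at this
      linarith [this]
  -- z₀ is real
  have hz₀im : z₀.im = 0 := hreal z₀ hz₀mem hz₀re
  set μ : ℝ := z₀.re with hμdef
  have hz₀eq : z₀ = (μ : ℂ) := by
    apply Complex.ext
    · simp [hμdef]
    · simp [hz₀im]
  have hμne : μ ≠ 0 := hz₀re
  have hμmem : (μ : ℂ) ∈ q.roots := by rw [← hz₀eq]; exact hz₀mem
  have hnμmem : (-(μ : ℂ)) ∈ q.roots := hmemneg _ hμmem
  have hμnen : (μ : ℂ) ≠ (-(μ : ℂ)) := by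
    intro h
    apply hμne
    have : (2 : ℂ) * μ = 0 := by linear_combination h
    rcases mul_eq_zero.mp this with h' | h'
    · norm_num at h'
    · exact_mod_cast h'
  have hnμmem' : (-(μ : ℂ)) ∈ q.roots.erase (μ : ℂ) :=
    Multiset.mem_erase_of_ne (Ne.symm hμnen) |>.mpr hnμmem
  set S : Multiset ℂ := (q.roots.erase (μ : ℂ)).erase (-(μ : ℂ)) with hSdef
  have hRdecomp : q.roots = (μ : ℂ) ::ₘ (-(μ : ℂ)) ::ₘ S := by
    rw [hSdef, Multiset.cons_erase hnμmem', Multiset.cons_erase hμmem]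
  refine ⟨μ, hμne, S, ?_, ?_, ?_⟩
  · -- all elements of S are purely imaginary
    intro z hzS
    by_contra hre
    have hzmem : z ∈ q.roots := by
      rw [hRdecomp]
      exact Multiset.mem_cons_of_mem (Multiset.mem_cons_of_mem hzS)
    have him : z.im = 0 := hreal z hzmem hre
    have hzreal : z = ((z.re : ℝ) : ℂ) := by
      apply Complex.ext <;> simp [him]
    -- z must equal μ or -μ, else `core` applies
    have hzcases : z = (μ : ℂ) ∨ z = (-(μ : ℂ)) := by
      by_contra hcon
      push_neg at hcon
      obtain ⟨hc1, hc2⟩ := hcon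
      obtain ⟨v1, hv1, he1⟩ := heig z hzmem
      obtain ⟨v2, hv2, he2⟩ := heig _ hμmem
      refine core hn C hC z (μ : ℂ) v1 v2 hv1 hv2 he1 he2 ?_ ?_ ?_ hc1
      · rw [hzreal, Complex.conj_ofReal]
        intro h
        apply hre
        have : (2 : ℂ) * (z.re : ℂ) = 0 := by linear_combination h
        rcases mul_eq_zero.mp this with h' | h'
        · norm_num at h'
        · exact_mod_cast h'
      · rw [Complex.conj_ofReal]
        intro h
        apply hμne
        have : (2 : ℂ) * (μ : ℂ) = 0 := by linear_combination h
        rcases mul_eq_zero.mp this with h' | h'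
        · norm_num at h'
        · exact_mod_cast h'
      · rw [hzreal, Complex.conj_ofReal]
        intro h
        apply hc2
        rw [hzreal]
        have : ((z.re : ℝ) : ℂ) = -(μ : ℂ) := by linear_combination h
        rw [this]
    -- either way, a real root has multiplicity ≥ 2 : contradiction
    rcases hzcases with h | h
    · apply count_le_one hn C hC μ hμne
      have : 2 ≤ q.roots.count (μ : ℂ) := by
        rw [hRdecomp]
        rw [Multiset.count_cons_self]
        have : 1 ≤ ((-(μ : ℂ)) ::ₘ S).count (μ : ℂ) := by
          rw [Multiset.count_cons_of_ne hμnen.symm.symm]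
          · exact Multiset.one_le_count_iff_mem.mpr (by rw [← h]; exact hzS)
        omega
      exact this
    · apply count_le_one hn C hC (-μ) (neg_ne_zero.mpr hμne)
      have : 2 ≤ q.roots.count (-(μ : ℂ)) := by
        rw [hRdecomp]
        rw [Multiset.count_cons_of_ne hμnen.symm, Multiset.count_cons_self]
        have : 1 ≤ S.count (-(μ : ℂ)) := Multiset.one_le_count_iff_mem.mpr (by rw [← h]; exact hzS)
        omega
      push_cast
      exact this
  · -- cardinality
    have : Multiset.card q.roots = Multiset.card S + 2 := by
      rw [hRdecomp]
      simp [Multiset.card_cons]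
    omega
  · exact hRdecomp
end

section
/- Let B ∈ so(n-1,1) be nilpotent and nonzero such that every eigenvalue of B is zero. Then the rank of B is at most 2. -/
open Matrix Polynomial

open Module Submodule in
private lemma aux_rank_step {n : ℕ} (f : (Fin n → ℝ) →ₗ[ℝ] (Fin n → ℝ))
    (W : Submodule ℝ (Fin n → ℝ)) :
    finrank ℝ (W.map f) + finrank ℝ (W ⊓ LinearMap.ker f : Submodule ℝ (Fin n → ℝ))
      = finrank ℝ W := by
  have h := LinearMap.finrank_range_add_finrank_ker (f ∘ₗ W.subtype)
  rw [LinearMap.range_comp, Submodule.range_subtype, LinearMap.ker_comp] at h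
  rw [← Submodule.map_comap_subtype W (LinearMap.ker f),
    Submodule.finrank_map_subtype_eq]
  exact h

private lemma dot_conj {n : ℕ} (M N : Matrix (Fin n) (Fin n) ℝ) (u : Fin n → ℝ) :
    u ⬝ᵥ ((Mᵀ * N) *ᵥ u) = (M *ᵥ u) ⬝ᵥ (N *ᵥ u) := by
  rw [← Matrix.mulVec_mulVec, Matrix.dotProduct_mulVec, Matrix.vecMul_transpose]

open Module in
private lemma aux_isotropic {n : ℕ} (J : Matrix (Fin n) (Fin n) ℝ)
    (hJsig : ∃ P : Matrix (Fin n) (Fin n) ℝ, IsUnit P ∧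
      Pᵀ * J * P = Matrix.diagonal (fun i : Fin n => if (i : ℕ) = n - 1 then (-1 : ℝ) else 1))
    (W : Submodule ℝ (Fin n → ℝ)) (hW : ∀ x ∈ W, x ⬝ᵥ (J *ᵥ x) = 0) :
    finrank ℝ W ≤ 1 := by
  obtain ⟨P, hP, hPJP⟩ := hJsig
  rcases Nat.eq_zero_or_pos n with hn | hn
  · refine le_trans (Submodule.finrank_le W) ?_
    simp [hn]
  -- the linear equivalence given by P
  obtain ⟨Pu, hPu⟩ := hP
  have h1 : P * (↑Pu⁻¹ : Matrix (Fin n) (Fin n) ℝ) = 1 := by rw [← hPu]; exact Pu.mul_inv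
  have h2 : (↑Pu⁻¹ : Matrix (Fin n) (Fin n) ℝ) * P = 1 := by rw [← hPu]; exact Pu.inv_mul
  let e : (Fin n → ℝ) ≃ₗ[ℝ] (Fin n → ℝ) :=
    LinearEquiv.ofLinear (Matrix.mulVecLin P) (Matrix.mulVecLin (↑Pu⁻¹))
      (by rw [← Matrix.mulVecLin_mul, h1, Matrix.mulVecLin_one])
      (by rw [← Matrix.mulVecLin_mul, h2, Matrix.mulVecLin_one])
  set W' : Submodule ℝ (Fin n → ℝ) := W.comap (e : (Fin n → ℝ) →ₗ[ℝ] (Fin n → ℝ)) with hW'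
  have hfr : finrank ℝ W' = finrank ℝ W := by
    rw [hW', Submodule.comap_equiv_eq_map_symm]
    exact LinearEquiv.finrank_map_eq _ _
  rw [← hfr]
  -- elements of W' are isotropic for the diagonal form
  have hdiag : ∀ u ∈ W', u ⬝ᵥ
      ((Matrix.diagonal (fun i : Fin n => if (i : ℕ) = n - 1 then (-1 : ℝ) else 1)) *ᵥ u) = 0 := by
    intro u hu
    have hu' : P *ᵥ u ∈ W := hu
    have h0 := hW _ hu'
    rw [Matrix.mulVec_mulVec, ← dot_conj P (J * P) u, ← Matrix.mul_assoc, hPJP] at h0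
    exact h0
  -- evaluation at the last coordinate is injective on W'
  let j0 : Fin n := ⟨n - 1, by omega⟩
  let φ : W' →ₗ[ℝ] ℝ := (LinearMap.proj j0).comp W'.subtype
  have hinj : Function.Injective φ := by
    rw [← LinearMap.ker_eq_bot, LinearMap.ker_eq_bot']
    intro x hx
    have hx0 : (x : Fin n → ℝ) j0 = 0 := hx
    have h0 := hdiag _ x.2
    have hterm : ∀ i : Fin n,
        (x : Fin n → ℝ) i * ((if (i : ℕ) = n - 1 then (-1 : ℝ) else 1) * (x : Fin n → ℝ) i)
          = (x : Fin n → ℝ) i * (x : Fin n → ℝ) i := by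
      intro i
      by_cases h : (i : ℕ) = n - 1
      · have : i = j0 := Fin.ext h
        rw [this, hx0]; ring
      · simp [h]
    have hsum : ∑ i, (x : Fin n → ℝ) i * (x : Fin n → ℝ) i = 0 := by
      rw [← h0]
      simp only [dotProduct, Matrix.mulVec_diagonal]
      exact Finset.sum_congr rfl fun i _ => (hterm i).symm
    have hz : ∀ i : Fin n, (x : Fin n → ℝ) i = 0 := by
      intro i
      have := (Finset.sum_eq_zero_iff_of_nonneg
        (fun i _ => mul_self_nonneg ((x : Fin n → ℝ) i))).1 hsum i (Finset.mem_univ i)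
      exact mul_self_eq_zero.1 this
    ext i; exact hz i
  calc finrank ℝ W' ≤ finrank ℝ ℝ := LinearMap.finrank_le_finrank_of_injective hinj
    _ = 1 := Module.finrank_self ℝ

private lemma skew_pow {n : ℕ} (J B : Matrix (Fin n) (Fin n) ℝ)
    (hBJ : Bᵀ * J = -(J * B)) (m : ℕ) :
    (B ^ m)ᵀ * J = ((-1 : ℝ) ^ m) • (J * B ^ m) := by
  induction m with
  | zero => simp
  | succ m ih =>
    rw [pow_succ, Matrix.transpose_mul, Matrix.mul_assoc, ih, Matrix.mul_smul, ← Matrix.mul_assoc,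
      hBJ, pow_succ]
    rw [Matrix.neg_mul, smul_neg, Matrix.mul_assoc, ← pow_succ', pow_succ]
    rw [mul_neg_one, neg_smul]

/-- a nonzero nilpotent element of `so(n-1,1)` all of whose eigenvalues
vanish has rank at most `2`. -/
theorem stmt_1 (n : ℕ) (J B : Matrix (Fin n) (Fin n) ℝ)
    (hJsymm : Jᵀ = J)
    (hJsig : ∃ P : Matrix (Fin n) (Fin n) ℝ, IsUnit P ∧
      Pᵀ * J * P = Matrix.diagonal (fun i : Fin n => if (i : ℕ) = n - 1 then (-1 : ℝ) else 1))
    (hB : Bᵀ * J + J * B = 0)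
    (hnil : IsNilpotent B) (hne : B ≠ 0)
    (heig : ∀ z ∈ ((Matrix.charpoly B).map (algebraMap ℝ ℂ)).roots, z = 0) :
    B.rank ≤ 2 := by
  classical
  have hBJ : Bᵀ * J = -(J * B) := eq_neg_of_add_eq_zero_left hB
  -- nilpotency index
  have hex : ∃ k, B ^ k = 0 := hnil
  set k := Nat.find hex with hkdef
  have hBk : B ^ k = 0 := Nat.find_spec hex
  have hmin : ∀ j, j < k → B ^ j ≠ 0 := fun j hj => Nat.find_min hex hj
  have hk2 : 2 ≤ k := by
    by_contra h
    interval_cases k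
    · have h1 : (1 : Matrix (Fin n) (Fin n) ℝ) = 0 := by simpa using hBk
      exact hne (by calc B = B * 1 := (mul_one B).symm
        _ = 0 := by rw [h1, mul_zero])
    · exact hne (by simpa using hBk)
  set f : (Fin n → ℝ) →ₗ[ℝ] (Fin n → ℝ) := Matrix.mulVecLin B with hf
  have hfpow : ∀ i, Matrix.mulVecLin (B ^ i) = f ^ i := by
    intro i
    induction i with
    | zero => rw [pow_zero, pow_zero, Matrix.mulVecLin_one]; rfl
    | succ i ih => rw [pow_succ, Matrix.mulVecLin_mul, ih, pow_succ]; rfl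
  set r : ℕ → ℕ := fun i => Module.finrank ℝ (LinearMap.range (f ^ i)) with hr
  set d : ℕ → ℕ := fun i =>
    Module.finrank ℝ (LinearMap.range (f ^ i) ⊓ LinearMap.ker f : Submodule ℝ (Fin n → ℝ))
    with hd
  have hstep : ∀ i, r (i + 1) + d i = r i := by
    intro i
    have hrange : LinearMap.range (f ^ (i + 1)) = (LinearMap.range (f ^ i)).map f := by
      rw [pow_succ', Module.End.mul_eq_comp, LinearMap.range_comp]
    have h2 := aux_rank_step f (LinearMap.range (f ^ i))
    rw [← hrange] at h2
    exact h2
  have hrange_mono : ∀ i j : ℕ, i ≤ j → LinearMap.range (f ^ j) ≤ LinearMap.range (f ^ i) := by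
    intro i j hij
    obtain ⟨t, rfl⟩ := Nat.exists_eq_add_of_le hij
    rw [pow_add, Module.End.mul_eq_comp, LinearMap.range_comp]
    exact LinearMap.map_le_range
  have hd_mono : ∀ i j : ℕ, i ≤ j → d j ≤ d i := by
    intro i j hij
    exact Submodule.finrank_mono (inf_le_inf_right _ (hrange_mono i j hij))
  -- d i ≤ 1 for i ≥ 1
  have hd_le : ∀ i, 1 ≤ i → d i ≤ 1 := by
    intro i hi
    refine le_trans (hd_mono 1 i hi) ?_
    refine le_trans (le_of_eq ?_) (aux_isotropic J hJsig
      (LinearMap.range (f ^ 1) ⊓ LinearMap.ker f) ?_)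
    · rfl
    · rintro x ⟨hx1, hx2⟩
      rw [pow_one] at hx1
      obtain ⟨u, rfl⟩ := hx1
      have hx2' : B *ᵥ (B *ᵥ u) = 0 := hx2
      have hfu : f u = B *ᵥ u := rfl
      rw [hfu]
      rw [Matrix.mulVec_mulVec, ← dot_conj B (J * B) u, ← Matrix.mul_assoc, hBJ,
        Matrix.neg_mul, Matrix.neg_mulVec, dotProduct_neg, Matrix.mul_assoc,
        ← Matrix.mulVec_mulVec, ← Matrix.mulVec_mulVec, hx2']
      simp
  -- r k = 0
  have hfk : f ^ k = 0 := by rw [← hfpow, hBk, Matrix.mulVecLin_zero]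
  have hrk : r k = 0 := by
    have hb : LinearMap.range (f ^ k) = ⊥ := by rw [hfk]; exact LinearMap.range_zero
    show Module.finrank ℝ (LinearMap.range (f ^ k)) = 0
    rw [hb]
    exact finrank_bot ℝ _
  -- d (k-1) ≥ 1
  have hrk1 : 1 ≤ r (k - 1) := by
    by_contra h
    have h0 : r (k - 1) = 0 := by omega
    have : LinearMap.range (f ^ (k - 1)) = ⊥ := Submodule.finrank_eq_zero.1 h0
    have : f ^ (k - 1) = 0 := LinearMap.range_eq_bot.1 this
    have : Matrix.mulVecLin (B ^ (k - 1)) = 0 := by rw [hfpow]; exact this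
    have hB0 : B ^ (k - 1) = 0 := by
      have := congrArg DFunLike.coe this
      ext i j
      have h2 := congrFun (congrFun this (Pi.single j 1)) i
      simpa [Matrix.mulVecLin_apply, Matrix.mulVec_single] using h2
    exact hmin (k - 1) (by omega) hB0
  have hdk1 : 1 ≤ d (k - 1) := by
    have := hstep (k - 1)
    rw [show k - 1 + 1 = k by omega, hrk] at this
    omega
  have hd_eq : ∀ i, 1 ≤ i → i ≤ k - 1 → d i = 1 := by
    intro i h1 h2
    have := hd_mono i (k - 1) h2
    have := hd_le i h1
    omega
  -- r (k - t) = t for t ≤ k - 1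
  have key : ∀ t, t ≤ k - 1 → r (k - t) = t := by
    intro t
    induction t with
    | zero => intro _; simpa using hrk
    | succ t ih =>
      intro ht
      have h1 := hstep (k - (t + 1))
      rw [show k - (t + 1) + 1 = k - t by omega] at h1
      rw [ih (by omega), hd_eq (k - (t + 1)) (by omega) (by omega)] at h1
      omega
  have hr1 : r 1 = k - 1 := by
    have := key (k - 1) le_rfl
    rw [show k - (k - 1) = 1 by omega] at this
    omega
  -- the middle power has isotropic range, hence rank ≤ 1
  set m : ℕ := (k + 1) / 2 with hm
  have hrm_le : r m ≤ 1 := by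
    refine le_trans (le_of_eq rfl) (aux_isotropic J hJsig (LinearMap.range (f ^ m)) ?_)
    rintro x ⟨u, rfl⟩
    have hfu : (f ^ m) u = B ^ m *ᵥ u := by rw [← hfpow]; rfl
    rw [hfu]
    have h2m : B ^ (2 * m) = 0 := by
      have : B ^ (2 * m) = B ^ k * B ^ (2 * m - k) := by
        rw [← pow_add, show k + (2 * m - k) = 2 * m by omega]
      rw [this, hBk, Matrix.zero_mul]
    rw [Matrix.mulVec_mulVec, ← dot_conj (B ^ m) (J * B ^ m) u, ← Matrix.mul_assoc,
      skew_pow J B hBJ m, Matrix.smul_mul, Matrix.mul_assoc, ← pow_add,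
      show m + m = 2 * m by omega, h2m, Matrix.mul_zero]
    simp
  have hrm : r m = k - m := by
    have := key (k - m) (by omega)
    rw [show k - (k - m) = m by omega] at this
    omega
  have hk3 : k ≤ 3 := by omega
  have : B.rank = r 1 := by
    show Module.finrank ℝ (LinearMap.range B.mulVecLin)
      = Module.finrank ℝ (LinearMap.range (f ^ 1))
    rw [pow_one]
  omega
end

section
/- Let N be a nilpotent matrix of the block form [[A, B],[C, 0]] where A = [[a₁₁,a₁₂,0],[a₂₁,0,a₁₂],[0,a₂₁,-a₁₁]] is 3×3, B is 3×p with third row zero, and C is p×3 with first column zero. If the commutator of N with the matrix E = [[0,1,0],[0,0,1],[0,0,0]] ⊕ 0ₚ (block diagonal) is also nilpotent, then a₂₁ = 0. -/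
open Matrix

lemma my_trace_fromBlocks {m n R : Type*} [Fintype m] [Fintype n] [AddCommMonoid R]
    (A : Matrix m m R) (B : Matrix m n R) (C : Matrix n m R) (D : Matrix n n R) :
    Matrix.trace (Matrix.fromBlocks A B C D) = Matrix.trace A + Matrix.trace D := by
  simp [Matrix.trace, Matrix.diag, Fintype.sum_sum_type, Matrix.fromBlocks]

/-- for a nilpotent block matrix `N = [[A,B],[C,0]]` of the stated
shape whose commutator with `E = [[0,1,0],[0,0,1],[0,0,0]] ⊕ 0ₚ` is again
nilpotent, one has `a₂₁ = 0`. -/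
theorem stmt_4 (p : ℕ) (a11 a12 a21 : ℝ)
    (B : Matrix (Fin 3) (Fin p) ℝ) (C : Matrix (Fin p) (Fin 3) ℝ)
    (hB : ∀ j, B 2 j = 0) (hC : ∀ i, C i 0 = 0)
    (N E : Matrix (Fin 3 ⊕ Fin p) (Fin 3 ⊕ Fin p) ℝ)
    (hN : N = Matrix.fromBlocks !![a11, a12, 0; a21, 0, a12; 0, a21, -a11] B C 0)
    (hE : E = Matrix.fromBlocks !![0, 1, 0; 0, 0, 1; 0, 0, 0] 0 0 0)
    (hNnil : IsNilpotent N)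
    (hcomm : IsNilpotent (N * E - E * N)) :
    a21 = 0 := by
  set M := N * E - E * N with hM
  have hM2 : IsNilpotent (M * M) := by
    obtain ⟨n, hn⟩ := hcomm
    exact ⟨n, by rw [← sq, ← pow_mul, mul_comm 2 n, pow_mul, hn, zero_pow (by norm_num)]⟩
  have htr : Matrix.trace (M * M) = 0 :=
    (Matrix.isNilpotent_trace_of_isNilpotent hM2).eq_zero
  subst hN hE
  rw [hM] at htr
  have hsub : ∀ (A₁ A₂ : Matrix (Fin 3) (Fin 3) ℝ) (B₁ B₂ : Matrix (Fin 3) (Fin p) ℝ)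
      (C₁ C₂ : Matrix (Fin p) (Fin 3) ℝ) (D₁ D₂ : Matrix (Fin p) (Fin p) ℝ),
      Matrix.fromBlocks A₁ B₁ C₁ D₁ - Matrix.fromBlocks A₂ B₂ C₂ D₂ =
      Matrix.fromBlocks (A₁ - A₂) (B₁ - B₂) (C₁ - C₂) (D₁ - D₂) := by
    intro A₁ A₂ B₁ B₂ C₁ C₂ D₁ D₂
    rw [sub_eq_add_neg, Matrix.fromBlocks_neg, Matrix.fromBlocks_add]
    simp [sub_eq_add_neg]
  simp only [Matrix.fromBlocks_multiply, hsub, my_trace_fromBlocks] at htr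
  simp only [Matrix.mul_zero, Matrix.zero_mul, add_zero, zero_add, sub_zero, zero_sub,
    Matrix.trace_add, Matrix.trace_sub] at htr
  have h2 : (-( !![(0:ℝ), 1, 0; 0, 0, 1; 0, 0, 0] * B) *
      (C * !![(0:ℝ), 1, 0; 0, 0, 1; 0, 0, 0])).trace = 0 := by
    simp [Matrix.trace_fin_three, Matrix.mul_apply, Matrix.vecMul, dotProduct,
      Fin.sum_univ_three, Matrix.vecHead, Matrix.vecTail, hB, hC]
  have h3 : (C * !![(0:ℝ), 1, 0; 0, 0, 1; 0, 0, 0] *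
      -(!![(0:ℝ), 1, 0; 0, 0, 1; 0, 0, 0] * B)).trace = 0 := by
    simp [Matrix.trace, Matrix.diag, Matrix.mul_apply, Matrix.vecMul, dotProduct,
      Fin.sum_univ_three, Matrix.vecHead, Matrix.vecTail, hB, hC]
  rw [h2, h3] at htr
  norm_num [Matrix.trace_fin_three, Matrix.mul_apply, Fin.sum_univ_three,
    Matrix.cons_val_two, Matrix.vecHead, Matrix.vecTail] at htr
  nlinarith [sq_nonneg a21, htr]
end

section
/- Let y be a real (p+3)×(p+3) matrix of the form with upper-left 3×3 block [[0,a,0],[0,0,a],[0,0,0]] plus a 3×p block B in the top-right with only nonzero first and second rows (b₁ᵢ, b₂ᵢ), a p×3 block C in the bottom-left whose columns are (0, -b₂ᵢ, b₁ᵢ)ᵗ, and zero bottom-right block. If y² is nilpotent, then the trace of y² equals -2·∑ᵢ b₂ᵢ², hence all b₂ᵢ = 0. -/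
open Matrix

/-- for `y` of the stated block shape with `y²` nilpotent, the trace
of `y²` equals `-2 ∑ᵢ b₂ᵢ²`, hence all `b₂ᵢ = 0`. -/
theorem stmt_5 (p : ℕ) (a : ℝ) (b1 b2 : Fin p → ℝ)
    (y : Matrix (Fin 3 ⊕ Fin p) (Fin 3 ⊕ Fin p) ℝ)
    (hy : y = Matrix.fromBlocks !![0, a, 0; 0, 0, a; 0, 0, 0]
      (Matrix.of fun i j => if i = 0 then b1 j else if i = 1 then b2 j else 0)
      (Matrix.of fun i j => if j = 1 then -(b2 i) else if j = 2 then b1 i else 0) 0)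
    (hnil : IsNilpotent (y * y)) :
    (y * y).trace = -2 * ∑ i, (b2 i) ^ 2 ∧ ∀ i, b2 i = 0 := by
  have htr : (y * y).trace = -2 * ∑ i, (b2 i) ^ 2 := by
    subst hy
    simp [Matrix.trace, Matrix.diag, Matrix.mul_apply, Fintype.sum_sum_type,
      Fin.sum_univ_three, Matrix.fromBlocks, ← Finset.sum_add_distrib, pow_two]
    ring
  have h0 : (y * y).trace = 0 :=
    (Matrix.isNilpotent_trace_of_isNilpotent hnil).eq_zero
  refine ⟨htr, ?_⟩
  have hsum : ∑ i, (b2 i) ^ 2 = 0 := by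
    have := htr.symm.trans h0
    linarith
  intro i
  have := (Finset.sum_eq_zero_iff_of_nonneg (fun i _ => sq_nonneg (b2 i))).mp hsum i
    (Finset.mem_univ i)
  exact pow_eq_zero_iff (by norm_num) |>.mp this
end

section
/- Let 𝔫 be a nilpotent Lie algebra with subspace 𝔳 such that ad(v)|_{[𝔫,𝔫]} = 0 for all v ∈ 𝔳, and let v₀ ∈ 𝔫 with [v, v₀] = 0 for all v ∈ 𝔳 and with ad(v₀)|_{[𝔫,𝔫]} strictly upper triangular mapping only e_{p+1} into Span(e₁,...,e_p). If there exist y, z ∈ 𝔞 := 𝔳 + ℝv₀ with the e_{p+1}-coefficient of [y,z] nonzero, then by the Jacobi identity ad(v₀)|_{[𝔫,𝔫]} = 0. -/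
open Sum

/-- in a nilpotent Lie algebra with `[𝔫,𝔫]` spanned by the basis
`e₁,…,e_{p+1}`, a subspace `𝔳` acting trivially on `[𝔫,𝔫]`, and `v₀` commuting
with `𝔳` and with `ad(v₀)` mapping only `e_{p+1}` into `Span(e₁,…,e_p)`, if some
bracket of elements of `𝔞 = 𝔳 + ℝv₀` has nonzero `e_{p+1}`-coefficient, then
`ad(v₀)|_{[𝔫,𝔫]} = 0`. -/
theorem stmt_11 (p : ℕ) (L : Type*) [LieRing L] [LieAlgebra ℝ L]
    [LieRing.IsNilpotent L]
    (e : Fin p ⊕ Unit → L) (hindep : LinearIndependent ℝ e)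
    (hbasisD : Submodule.span ℝ (Set.range e) =
      (LieModule.lowerCentralSeries ℝ L L 1).toSubmodule)
    (v : Submodule ℝ L) (v0 : L) (Bc : Fin p → ℝ)
    (hv : ∀ x ∈ v, ∀ w ∈ LieModule.lowerCentralSeries ℝ L L 1, ⁅x, w⁆ = 0)
    (hvv0 : ∀ x ∈ v, ⁅x, v0⁆ = 0)
    (hv0e : ∀ j : Fin p, ⁅v0, e (inl j)⁆ = 0)
    (hv0last : ⁅v0, e (inr ())⁆ = ∑ i, Bc i • e (inl i))
    (hgen : (v ⊔ Submodule.span ℝ {v0}) ⊔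
      (LieModule.lowerCentralSeries ℝ L L 1).toSubmodule = ⊤)
    (hyz : ∃ y ∈ v ⊔ Submodule.span ℝ {v0}, ∃ z ∈ v ⊔ Submodule.span ℝ {v0},
      ∃ c : Fin p ⊕ Unit → ℝ, ⁅y, z⁆ = ∑ k, c k • e k ∧ c (inr ()) ≠ 0) :
    ∀ w ∈ LieModule.lowerCentralSeries ℝ L L 1, ⁅v0, w⁆ = 0 := by
  -- First: `v0` commutes with everything in `𝔞 = v ⊔ span{v0}`.
  have hcomm : ∀ y ∈ v ⊔ Submodule.span ℝ {v0}, ⁅v0, y⁆ = 0 := by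
    intro y hy
    rcases Submodule.mem_sup.mp hy with ⟨a, ha, b, hb, rfl⟩
    rcases Submodule.mem_span_singleton.mp hb with ⟨t, rfl⟩
    have h1 : ⁅v0, a⁆ = 0 := by
      rw [← lie_skew, hvv0 a ha, neg_zero]
    simp [h1]
  -- From `hyz`, deduce `⁅v0, e (inr ())⁆ = 0`.
  obtain ⟨y, hy, z, hz, c, hc, hcne⟩ := hyz
  have hjac : ⁅v0, ⁅y, z⁆⁆ = 0 := by
    rw [leibniz_lie, hcomm y hy, hcomm z hz]
    simp
  have hsum : c (inr ()) • ⁅v0, e (inr ())⁆ = 0 := by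
    have h0 : (LieAlgebra.ad ℝ L v0) (∑ k, c k • e k) = 0 := by
      rw [← hc]; simpa [LieAlgebra.ad_apply] using hjac
    rw [map_sum] at h0
    simp only [map_smul] at h0
    rw [Fintype.sum_sum_type] at h0
    simpa [LieAlgebra.ad_apply, hv0e] using h0
  have hlast : ⁅v0, e (inr ())⁆ = 0 := by
    rcases smul_eq_zero.mp hsum with h | h
    · exact absurd h hcne
    · exact h
  have he : ∀ k, ⁅v0, e k⁆ = 0 := by
    rintro (j | ⟨⟩)
    · exact hv0e j
    · exact hlast
  -- Now extend to all of `[L, L]` by linearity.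
  intro w hw
  have hw' : w ∈ Submodule.span ℝ (Set.range e) := by
    rw [hbasisD]; exact hw
  clear hw
  induction hw' using Submodule.span_induction with
  | mem x hx => rcases hx with ⟨k, rfl⟩; exact he k
  | zero => simp
  | add x y _ _ hx hy => rw [lie_add, hx, hy, add_zero]
  | smul t x _ hx => rw [lie_smul, hx, smul_zero]
end

section
/- Let A be an n×n real matrix satisfying AᵗJ + JA = 0 for a symmetric nondegenerate J, and suppose A preserves a subspace on which J is positive definite of dimension n-2 with A acting with rank 2 on the whole space. If λ is large enough and E is a fixed matrix of rank 2 in so(J) with nonzero entries only in a 3×3 corner Jordan block, then nonvanishing of the bottom-right block D of A forces rank(λE + A) ≥ 3. -/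
open Matrix

lemma quad_ne_zero (a b c : ℝ) (ha : a ≠ 0) :
    ∃ Λ : ℝ, ∀ l : ℝ, Λ ≤ l → a * l ^ 2 + b * l + c ≠ 0 := by
  refine ⟨(|b| + |c|) / |a| + 1, fun l hl hz => ?_⟩
  have h0 : (0:ℝ) < |a| := abs_pos.mpr ha
  have h1 : (0:ℝ) ≤ (|b| + |c|) / |a| := by positivity
  have hl1 : (1:ℝ) ≤ l := by linarith
  have key : |a| * l ^ 2 ≤ |b| * l + |c| := by
    have : a * l ^ 2 = -(b * l + c) := by linarith
    calc |a| * l ^ 2 = |a * l ^ 2| := by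
          rw [abs_mul, abs_pow, abs_of_nonneg (by linarith : (0:ℝ) ≤ l)]
      _ = |b * l + c| := by rw [this, abs_neg]
      _ ≤ |b * l| + |c| := abs_add_le _ _
      _ = |b| * l + |c| := by rw [abs_mul, abs_of_nonneg (by linarith : (0:ℝ) ≤ l)]
  have hdiv : (|b| + |c|) ≤ |a| * ((|b| + |c|) / |a|) := by
    rw [mul_div_cancel₀ _ (ne_of_gt h0)]
  nlinarith [abs_nonneg b, abs_nonneg c, mul_pos h0 (lt_of_lt_of_le (by linarith) hl)]

lemma rank_submatrix_le'' {m n m' n' : Type*} [Fintype m] [Fintype n] [Fintype m'] [Fintype n']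
    [DecidableEq m] [DecidableEq n]
    (A : Matrix m n ℝ) (f : m' → m) (g : n' → n) :
    (A.submatrix f g).rank ≤ A.rank := by
  classical
  let P : Matrix m' m ℝ := fun i x => if x = f i then 1 else 0
  let Q : Matrix n n' ℝ := fun x j => if x = g j then 1 else 0
  have hM : A.submatrix f g = P * (A * Q) := by
    ext i j
    simp only [Matrix.submatrix_apply, Matrix.mul_apply]
    simp [P, Q, Matrix.mul_apply, Finset.sum_ite_eq, Finset.mul_sum]
  rw [hM]
  exact le_trans (Matrix.rank_mul_le_right _ _) (Matrix.rank_mul_le_left _ _)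

/-- for `A ∈ so(J)` of rank 2 preserving a positive definite
subspace of codimension 2, written in block form `[[A₀,B],[C,D]]`, and `E` the
rank-2 element of `so(J)` with a single 3×3 Jordan block, if `D ≠ 0` then for
all sufficiently large `λ` the matrix `λE + A` has rank at least 3. -/
theorem stmt_15 (q : ℕ) (J A : Matrix (Fin 3 ⊕ Fin q) (Fin 3 ⊕ Fin q) ℝ)
    (hJsymm : Jᵀ = J) (hJunit : IsUnit J)
    (hskew : Aᵀ * J + J * A = 0)
    (A0 : Matrix (Fin 3) (Fin 3) ℝ) (B : Matrix (Fin 3) (Fin q) ℝ)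
    (C : Matrix (Fin q) (Fin 3) ℝ) (D : Matrix (Fin q) (Fin q) ℝ)
    (hA : A = Matrix.fromBlocks A0 B C D)
    (W : Submodule ℝ (Fin 3 ⊕ Fin q → ℝ))
    (hWdim : Module.finrank ℝ W = q + 1)
    (hWpos : ∀ v ∈ W, v ≠ 0 → 0 < Matrix.toBilin' J v v)
    (hWinv : ∀ v ∈ W, A.mulVec v ∈ W)
    (hrank : A.rank = 2)
    (E : Matrix (Fin 3 ⊕ Fin q) (Fin 3 ⊕ Fin q) ℝ)
    (hE : E = Matrix.fromBlocks !![0, 1, 0; 0, 0, 1; 0, 0, 0] 0 0 0)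
    (hEskew : Eᵀ * J + J * E = 0)
    (hD : D ≠ 0) :
    ∃ Λ : ℝ, ∀ l : ℝ, Λ ≤ l → 3 ≤ (l • E + A).rank := by
  classical
  obtain ⟨j, k, hjk⟩ : ∃ j k, D j k ≠ 0 := by
    by_contra h
    push_neg at h
    exact hD (by ext j k; simpa using h j k)
  set f : Fin 3 → Fin 3 ⊕ Fin q := ![Sum.inl 0, Sum.inl 1, Sum.inr j] with hf
  set g : Fin 3 → Fin 3 ⊕ Fin q := ![Sum.inl 1, Sum.inl 2, Sum.inr k] with hg
  set b : ℝ := A0 0 1 * D j k + A0 1 2 * D j k - B 1 k * C j 2 - B 0 k * C j 1 with hb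
  set c : ℝ := A0 0 1 * (A0 1 2 * D j k - B 1 k * C j 2)
      - A0 0 2 * (A0 1 1 * D j k - B 1 k * C j 1)
      + B 0 k * (A0 1 1 * C j 2 - A0 1 2 * C j 1) with hc
  have hdet : ∀ l : ℝ, ((l • E + A).submatrix f g).det = D j k * l ^ 2 + b * l + c := by
    intro l
    rw [Matrix.det_fin_three]
    simp only [hf, hg, Matrix.submatrix_apply, Matrix.cons_val_zero, Matrix.cons_val_one,
      Matrix.head_cons, Matrix.cons_val_two, Matrix.tail_cons, Matrix.add_apply,
      Matrix.smul_apply, hA, hE, Matrix.fromBlocks_apply₁₁, Matrix.fromBlocks_apply₁₂,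
      Matrix.fromBlocks_apply₂₁, Matrix.fromBlocks_apply₂₂, Matrix.cons_val', Matrix.empty_val',
      Matrix.cons_val_fin_one, Matrix.zero_apply, smul_eq_mul, mul_zero, mul_one, add_zero,
      zero_add, Matrix.cons_val_one, Matrix.head_fin_const, Matrix.head_cons, hb, hc]
    norm_num [Matrix.cons_val_zero, Matrix.cons_val_one, Matrix.head_cons, Matrix.cons_val]
    have e1 : (![0, 0, 1] : Fin 3 → ℝ) 2 = 1 := rfl
    have e2 : (![0, 1, 0] : Fin 3 → ℝ) 2 = 0 := rfl
    rw [e1, e2]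
    ring
  obtain ⟨Λ, hΛ⟩ := quad_ne_zero (D j k) b c hjk
  refine ⟨Λ, fun l hl => ?_⟩
  have hdetne : ((l • E + A).submatrix f g).det ≠ 0 := by
    rw [hdet l]; exact hΛ l hl
  have hunit : IsUnit ((l • E + A).submatrix f g) :=
    (Matrix.isUnit_iff_isUnit_det _).mpr (isUnit_iff_ne_zero.mpr hdetne)
  have h3 : ((l • E + A).submatrix f g).rank = 3 := by
    rw [Matrix.rank_of_isUnit _ hunit, Fintype.card_fin]
  calc (3 : ℕ) = ((l • E + A).submatrix f g).rank := h3.symm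
    _ ≤ (l • E + A).rank := rank_submatrix_le'' _ f g
end

section
/- Let D ∈ so(p+1,1) (with respect to a form of signature (p+1,1)) be nilpotent and preserve a codimension-one degenerate hyperplane on which it acts as zero. Then D = 0. -/
open Matrix

theorem aux_skew (p : ℕ) (J M : Matrix (Fin (p + 2)) (Fin (p + 2)) ℝ)
    (hskew : Mᵀ * J + J * M = 0) (x y : Fin (p+2) → ℝ) :
    (M *ᵥ x) ⬝ᵥ (J *ᵥ y) = -(x ⬝ᵥ (J *ᵥ (M *ᵥ y))) := by
  have h1 : Mᵀ * J = -(J * M) := eq_neg_of_add_eq_zero_left hskew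
  have : M *ᵥ x = vecMul x Mᵀ := (Matrix.vecMul_transpose M x).symm
  rw [this, Matrix.dotProduct_mulVec, Matrix.vecMul_vecMul, h1,
    Matrix.mulVec_mulVec, Matrix.dotProduct_mulVec]
  simp [Matrix.vecMul_neg]

/-- a nilpotent element of `so(p+1,1)` acting as zero on a
codimension-one degenerate hyperplane is zero. -/
theorem stmt_19 (p : ℕ) (J M : Matrix (Fin (p + 2)) (Fin (p + 2)) ℝ)
    (hJsymm : Jᵀ = J)
    (hJsig : ∃ P : Matrix (Fin (p + 2)) (Fin (p + 2)) ℝ, IsUnit P ∧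
      Pᵀ * J * P = Matrix.diagonal
        (fun i : Fin (p + 2) => if (i : ℕ) = p + 1 then (-1 : ℝ) else 1))
    (hskew : Mᵀ * J + J * M = 0)
    (hnil : IsNilpotent M)
    (H : Submodule ℝ (Fin (p + 2) → ℝ))
    (hHdim : Module.finrank ℝ H = p + 1)
    (hHdeg : ∃ u ∈ H, u ≠ 0 ∧ ∀ w ∈ H, Matrix.toBilin' J u w = 0)
    (hzero : ∀ u ∈ H, M.mulVec u = 0) :
    M = 0 := by
  -- J is invertible
  obtain ⟨P, hP, hPJP⟩ := hJsig
  have hJdet : J.det ≠ 0 := by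
    have hD : (Pᵀ * J * P).det ≠ 0 := by
      rw [hPJP, Matrix.det_diagonal]
      refine Finset.prod_ne_zero_iff.mpr fun i _ => ?_
      split <;> norm_num
    have hPdet : P.det ≠ 0 := by
      intro h
      simp [Matrix.isUnit_iff_isUnit_det, h] at hP
    rw [Matrix.det_mul, Matrix.det_mul, Matrix.det_transpose] at hD
    intro h; apply hD; rw [h]; ring
  have hJunit : IsUnit J := by rwa [Matrix.isUnit_iff_isUnit_det, isUnit_iff_ne_zero]
  -- symmetry of the form
  have hBsymm : ∀ x y : Fin (p+2) → ℝ, x ⬝ᵥ (J *ᵥ y) = y ⬝ᵥ (J *ᵥ x) := by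
    intro x y
    rw [Matrix.dotProduct_mulVec]
    nth_rewrite 1 [← hJsymm]
    rw [Matrix.vecMul_transpose]
    exact dotProduct_comm (J *ᵥ x) y
  have hB : ∀ x y, (M *ᵥ x) ⬝ᵥ (J *ᵥ y) = -(x ⬝ᵥ (J *ᵥ (M *ᵥ y))) :=
    aux_skew p J M hskew
  -- quadratic vanishing
  have hquad : ∀ x, (M *ᵥ x) ⬝ᵥ (J *ᵥ x) = 0 := by
    intro x
    have h1 := hB x x
    have h2 : x ⬝ᵥ (J *ᵥ (M *ᵥ x)) = (M *ᵥ x) ⬝ᵥ (J *ᵥ x) := hBsymm x _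
    rw [h2] at h1
    linarith
  -- main claim: M *ᵥ x = 0 for all x
  have hMzero : ∀ x, M *ᵥ x = 0 := by
    by_contra hcon
    push_neg at hcon
    obtain ⟨x₀, hx₀⟩ := hcon
    set v := M *ᵥ x₀ with hv
    set L := M.mulVecLin with hL
    -- range L = span {v}
    have hker : H ≤ LinearMap.ker L := fun u hu => by
      simpa [hL] using hzero u hu
    have hrange_le : Module.finrank ℝ (LinearMap.range L) ≤ 1 := by
      have hrn := LinearMap.finrank_range_add_finrank_ker L
      have hkd : p + 1 ≤ Module.finrank ℝ (LinearMap.ker L) := by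
        rw [← hHdim]; exact Submodule.finrank_mono hker
      have hfull : Module.finrank ℝ (Fin (p+2) → ℝ) = p + 2 := by
        simp
      omega
    have hvmem : v ∈ LinearMap.range L := ⟨x₀, rfl⟩
    have hspan_le : Submodule.span ℝ {v} ≤ LinearMap.range L := by
      rwa [Submodule.span_singleton_le_iff_mem]
    have hspan_dim : Module.finrank ℝ (Submodule.span ℝ {v}) = 1 :=
      finrank_span_singleton hx₀
    have hrange_eq : Submodule.span ℝ {v} = LinearMap.range L :=
      Submodule.eq_of_le_of_finrank_le hspan_le (by rw [hspan_dim]; exact hrange_le)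
    have hallc : ∀ y, ∃ c : ℝ, M *ᵥ y = c • v := by
      intro y
      have : L y ∈ LinearMap.range L := ⟨y, rfl⟩
      rw [← hrange_eq, Submodule.mem_span_singleton] at this
      obtain ⟨c, hc⟩ := this
      exact ⟨c, hc.symm⟩
    -- B(v, x₀) = 0
    have hvx₀ : v ⬝ᵥ (J *ᵥ x₀) = 0 := hquad x₀
    -- B(v, y) = 0 for all y
    have hvall : ∀ y, v ⬝ᵥ (J *ᵥ y) = 0 := by
      intro y
      obtain ⟨c, hc⟩ := hallc y
      have h1 := hB x₀ y
      rw [← hv, hc] at h1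
      have h2 : x₀ ⬝ᵥ (J *ᵥ (c • v)) = c * (v ⬝ᵥ (J *ᵥ x₀)) := by
        rw [Matrix.mulVec_smul, dotProduct_smul, hBsymm x₀ v]
        simp
      rw [h2, hvx₀] at h1
      simpa using h1
    -- hence vecMul v J = 0, so v = 0
    have hvJ : Matrix.vecMul v J = 0 := by
      funext i
      have := hvall (Pi.single i 1)
      rw [Matrix.dotProduct_mulVec] at this
      simpa using this
    have : v = 0 := by
      have h := congrArg (fun w => Matrix.vecMul w J⁻¹) hvJ
      simpa [Matrix.vecMul_vecMul, Matrix.mul_nonsing_inv J (isUnit_iff_ne_zero.mpr hJdet)] using h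
    exact hx₀ this
  ext i j
  have := hMzero (Pi.single j 1)
  have h2 := congrFun this i
  simpa [Matrix.mulVec_single] using h2
end
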